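/- arXiv:2203.16617 — 6 statements merged into one kernel-verified Lean document; each statement's English description precedes it below -/
import Mathlib

section
/- Let X be a complex Banach space, let J be a finite nonempty set of positive integers such that J ∪ {0} is NOT a Sidon set, and let T : X → X be a continuous linear operator such that the family {T^j : j ∈ J} is disjoint hypercyclic. Then T is weakly mixing. -/
/-- A set `A ⊆ ℕ` is Sidon if whenever `a + b = c + d` with all four in `A`,
then `{a, b} = {c, d}`. -/
def IsSidon (A : Set ℕ) : Prop :=
  ∀ a ∈ A, ∀ b ∈ A, ∀ c ∈ A, ∀ d ∈ A, a + b = c + d → ({a, b} : Set ℕ) = {c, d}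

/-- `T` is weakly mixing if `T ⊕ T` has a dense orbit on `X × X`. -/
def WeaklyMixing {X : Type*} [NormedAddCommGroup X] [NormedSpace ℂ X]
    (T : X →L[ℂ] X) : Prop :=
  ∃ x y : X, Dense (Set.range fun n : ℕ => ((T ^ n) x, (T ^ n) y))

namespace Stmt0Proof

/-- Normalisation of a non-Sidon witness. -/
lemma quad {a b c d : ℕ} (h : a + b = c + d) (hne : ({a, b} : Set ℕ) ≠ {c, d}) :
    ∃ A B C D : ℕ, A + B = C + D ∧ B < D ∧ D ≤ C ∧ C < A ∧
      (A = a ∨ A = b ∨ A = c ∨ A = d) ∧ (B = a ∨ B = b ∨ B = c ∨ B = d) ∧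
      (C = a ∨ C = b ∨ C = c ∨ C = d) ∧ (D = a ∨ D = b ∨ D = c ∨ D = d) := by
  have h1 : ¬(a = c ∧ b = d) := fun ⟨e1, e2⟩ => hne (by rw [e1, e2])
  have h2 : ¬(a = d ∧ b = c) := fun ⟨e1, e2⟩ => hne (by rw [e1, e2, Set.pair_comm])
  rcases le_total b a with h3 | h3 <;> rcases le_total d c with h4 | h4
  · rcases le_total a c with h5 | h5
    · exact ⟨c, d, a, b, by omega, by omega, by omega, by omega,
        by omega, by omega, by omega, by omega⟩
    · exact ⟨a, b, c, d, by omega, by omega, by omega, by omega,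
        by omega, by omega, by omega, by omega⟩
  · rcases le_total a d with h5 | h5
    · exact ⟨d, c, a, b, by omega, by omega, by omega, by omega,
        by omega, by omega, by omega, by omega⟩
    · exact ⟨a, b, d, c, by omega, by omega, by omega, by omega,
        by omega, by omega, by omega, by omega⟩
  · rcases le_total b c with h5 | h5
    · exact ⟨c, d, b, a, by omega, by omega, by omega, by omega,
        by omega, by omega, by omega, by omega⟩
    · exact ⟨b, a, c, d, by omega, by omega, by omega, by omega,
        by omega, by omega, by omega, by omega⟩
  · rcases le_total b d with h5 | h5
    · exact ⟨d, c, b, a, by omega, by omega, by omega, by omega,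
        by omega, by omega, by omega, by omega⟩
    · exact ⟨b, a, d, c, by omega, by omega, by omega, by omega,
        by omega, by omega, by omega, by omega⟩

variable {X : Type*} [NormedAddCommGroup X] [NormedSpace ℂ X]

/-- `y` is a disjoint-hypercyclic vector for the powers `T ^ j`, `j ∈ J`. -/
def DHC (J : Finset ℕ) (T : X →L[ℂ] X) (y : X) : Prop :=
  Dense (Set.range fun n : ℕ => fun j : J => ((T ^ (j : ℕ)) ^ n) y)

lemma pow_comm_apply (T : X →L[ℂ] X) (s t : ℕ) (z : X) :
    (T ^ s) ((T ^ t) z) = (T ^ t) ((T ^ s) z) := by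
  rw [← ContinuousLinearMap.mul_apply, ← ContinuousLinearMap.mul_apply, pow_mul_comm]

lemma pow_add_apply (T : X →L[ℂ] X) (s t : ℕ) (z : X) :
    (T ^ (s + t)) z = (T ^ s) ((T ^ t) z) := by
  rw [pow_add, ContinuousLinearMap.mul_apply]

lemma targets {J : Finset ℕ} {T : X →L[ℂ] X} {y : X} (hy : DHC J T y)
    (f : ℕ → X) {ε : ℝ} (hε : 0 < ε) :
    ∃ n : ℕ, ∀ j : J, ‖((T ^ (j : ℕ)) ^ n) y - f (j : ℕ)‖ < ε := by
  obtain ⟨b, ⟨n, rfl⟩, hb⟩ :=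
    Metric.mem_closure_iff.mp (hy (fun j : J => f (j : ℕ))) ε hε
  refine ⟨n, fun j => ?_⟩
  have h := (dist_pi_lt_iff hε).mp hb j
  rw [dist_eq_norm] at h
  rw [norm_sub_rev]
  exact h

lemma coordDense {J : Finset ℕ} {T : X →L[ℂ] X} {y : X} (hy : DHC J T y)
    {A : ℕ} (hA : A ∈ J) (w : X) {ε : ℝ} (hε : 0 < ε) :
    ∃ n : ℕ, ‖(T ^ (A * n)) y - w‖ < ε := by
  obtain ⟨n, hn⟩ := targets hy (fun _ => w) hε
  refine ⟨n, ?_⟩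
  rw [pow_mul]
  exact hn ⟨A, hA⟩

lemma denseRangeT {J : Finset ℕ} {T : X →L[ℂ] X} {x : X} (hx : DHC J T x)
    {A C : ℕ} (hA : A ∈ J) (hC : C ∈ J) (hApos : 0 < A) (hAC : A ≠ C) :
    DenseRange T := by
  intro w
  rw [Metric.mem_closure_iff]
  intro r hr
  rcases subsingleton_or_nontrivial X with hs | hnt
  · exact ⟨T 0, ⟨0, rfl⟩, by rw [Subsingleton.elim w (T 0)]; simpa using hr⟩
  · obtain ⟨e, he⟩ := exists_ne (0 : X)
    have hepos : 0 < ‖e‖ := norm_pos_iff.mpr he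
    have hεpos : 0 < min r (‖e‖ / 3) := lt_min hr (by positivity)
    obtain ⟨n, hn⟩ := targets hx (fun i => if i = A then w else w + e) hεpos
    have h1 : ‖((T ^ A) ^ n) x - w‖ < min r (‖e‖ / 3) := by simpa using hn ⟨A, hA⟩
    have h2 : ‖((T ^ C) ^ n) x - (w + e)‖ < min r (‖e‖ / 3) := by
      have h := hn ⟨C, hC⟩
      rw [show (if C = A then w else w + e) = w + e from if_neg (by omega)] at h
      exact h
    have hn1 : 1 ≤ A * n := by
      rcases Nat.eq_zero_or_pos n with h0 | h0
      · exfalso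
        subst h0
        rw [pow_zero, ContinuousLinearMap.one_apply] at h1 h2
        have he3 : ‖e‖ ≤ ‖x - w‖ + ‖x - (w + e)‖ := by
          have heq : e = (x - w) - (x - (w + e)) := by abel
          calc ‖e‖ = ‖(x - w) - (x - (w + e))‖ := by rw [← heq]
          _ ≤ ‖x - w‖ + ‖x - (w + e)‖ := norm_sub_le _ _
        have hm : min r (‖e‖ / 3) ≤ ‖e‖ / 3 := min_le_right _ _
        linarith
      · calc 1 ≤ n := h0
        _ ≤ A * n := Nat.le_mul_of_pos_left n hApos
    refine ⟨T ((T ^ (A * n - 1)) x), ⟨_, rfl⟩, ?_⟩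
    have heq : T ((T ^ (A * n - 1)) x) = ((T ^ A) ^ n) x := by
      rw [← ContinuousLinearMap.mul_apply, ← pow_succ', ← pow_mul]
      congr 2
      omega
    rw [heq, dist_eq_norm, norm_sub_rev]
    exact lt_of_lt_of_le h1 (min_le_left _ _)

lemma denseRangePow {T : X →L[ℂ] X} (hT : DenseRange T) : ∀ m : ℕ, DenseRange (T ^ m)
  | 0 => by
      intro w
      exact subset_closure ⟨w, by simp⟩
  | (m + 1) => by
      have h2 : ⇑(T ^ (m + 1)) = ⇑(T ^ m) ∘ ⇑T := by
        ext z
        rw [Function.comp_apply, ← ContinuousLinearMap.mul_apply, ← pow_succ]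
      have h3 := DenseRange.comp (denseRangePow hT m) hT (T ^ m).continuous
      rw [← h2] at h3
      exact h3

lemma dhc_shift {J : Finset ℕ} {T : X →L[ℂ] X} {x : X} (hx : DHC J T x)
    (hT : DenseRange T) (m : ℕ) : DHC J T ((T ^ m) x) := by
  classical
  intro g
  rw [Metric.mem_closure_iff]
  intro ε hε
  have hKpos : (0:ℝ) < ‖T ^ m‖ + 1 := by positivity
  have hv : ∀ j : J, ∃ v : X, ‖(T ^ m) v - g j‖ < ε / 2 := by
    intro j
    obtain ⟨b, ⟨v, rfl⟩, hb⟩ :=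
      Metric.mem_closure_iff.mp (denseRangePow hT m (g j)) (ε / 2) (by positivity)
    refine ⟨v, ?_⟩
    rw [dist_comm, dist_eq_norm] at hb
    exact hb
  choose v hvv using hv
  have hδpos : 0 < ε / (2 * (‖T ^ m‖ + 1)) := by positivity
  obtain ⟨n, hn⟩ := targets hx (fun i => if h : i ∈ J then v ⟨i, h⟩ else 0) hδpos
  refine ⟨_, ⟨n, rfl⟩, ?_⟩
  rw [dist_pi_lt_iff hε]
  intro j
  show dist (g j) (((T ^ (j : ℕ)) ^ n) ((T ^ m) x)) < ε
  have hco : ((T ^ (j : ℕ)) ^ n) ((T ^ m) x) = (T ^ m) (((T ^ (j : ℕ)) ^ n) x) := by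
    rw [← pow_mul, pow_comm_apply, pow_mul]
  rw [dist_eq_norm, hco]
  have h1 := hn j
  rw [show (if h : (j:ℕ) ∈ J then v ⟨(j:ℕ), h⟩ else 0) = v j from by
    rw [dif_pos j.2]] at h1
  have hb1 : ‖(T ^ m) (((T ^ (j:ℕ)) ^ n) x) - (T ^ m) (v j)‖
      ≤ ‖T ^ m‖ * ‖((T ^ (j:ℕ)) ^ n) x - v j‖ := by
    rw [← map_sub]
    exact ContinuousLinearMap.le_opNorm _ _
  have hb2 : ‖T ^ m‖ * ‖((T ^ (j:ℕ)) ^ n) x - v j‖ < ε / 2 := by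
    have hle : ‖T ^ m‖ * ‖((T ^ (j:ℕ)) ^ n) x - v j‖
        ≤ ‖T ^ m‖ * (ε / (2 * (‖T ^ m‖ + 1))) :=
      mul_le_mul_of_nonneg_left h1.le (norm_nonneg _)
    have hlt : ‖T ^ m‖ * (ε / (2 * (‖T ^ m‖ + 1)))
        < (‖T ^ m‖ + 1) * (ε / (2 * (‖T ^ m‖ + 1))) :=
      mul_lt_mul_of_pos_right (lt_add_one _) hδpos
    have heq : (‖T ^ m‖ + 1) * (ε / (2 * (‖T ^ m‖ + 1))) = ε / 2 := by
      field_simp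
    linarith
  have hsplit : g j - (T ^ m) (((T ^ (j:ℕ)) ^ n) x)
      = (g j - (T ^ m) (v j)) - ((T ^ m) (((T ^ (j:ℕ)) ^ n) x) - (T ^ m) (v j)) := by
    abel
  rw [hsplit]
  have htv := hvv j
  rw [norm_sub_rev] at htv
  calc ‖(g j - (T ^ m) (v j)) - ((T ^ m) (((T ^ (j:ℕ)) ^ n) x) - (T ^ m) (v j))‖
      ≤ ‖g j - (T ^ m) (v j)‖ + ‖(T ^ m) (((T ^ (j:ℕ)) ^ n) x) - (T ^ m) (v j)‖ :=
        norm_sub_le _ _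
  _ < ε / 2 + ε / 2 := by
      have := lt_of_le_of_lt hb1 hb2
      linarith
  _ = ε := by ring

lemma dhc_dense {J : Finset ℕ} {T : X →L[ℂ] X} {x : X} (hx : DHC J T x)
    (hT : DenseRange T) {A : ℕ} (hA : A ∈ J) (q : X) {ε : ℝ} (hε : 0 < ε) :
    ∃ z : X, ‖z - q‖ < ε ∧ DHC J T z := by
  obtain ⟨n, hn⟩ := coordDense hx hA q hε
  exact ⟨_, hn, dhc_shift hx hT (A * n)⟩

lemma transit {J : Finset ℕ} {T : X →L[ℂ] X} {x : X} (hx : DHC J T x)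
    {A B C D : ℕ} (hA : A ∈ J) (hC : C ∈ J) (hD : D ∈ J) (hB : B = 0 ∨ B ∈ J)
    (hsum : A + B = C + D) (hBD : B < D) (hDC : D ≤ C) (hCA : C < A)
    (p q b₁ b₂ : X) (ε : ℝ) (hε : 0 < ε) :
    ∃ (N : ℕ) (u v : X), ‖u - p‖ < ε ∧ ‖v - q‖ < ε ∧
      ‖(T ^ N) u - b₁‖ < ε ∧ ‖(T ^ N) v - b₂‖ < ε := by
  classical
  have hApos : 0 < A := by omega
  have hAC : A ≠ C := by omega
  have hT : DenseRange T := denseRangeT hx hA hC hApos hAC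
  obtain ⟨z, hzq, hz⟩ := dhc_dense hx hT hA q (show (0:ℝ) < ε / 2 by positivity)
  obtain ⟨n₂, hn₂⟩ := coordDense hz hA (p - b₂) (show (0:ℝ) < ε / 4 by positivity)
  set L := T ^ (A * n₂) with hLdef
  set K := ‖L‖ + 1 with hKdef
  have hKpos : 0 < K := by positivity
  set δ := min (ε / 4) (ε / (4 * K)) with hδdef
  have hδpos : 0 < δ := lt_min (by positivity) (by positivity)
  have hδ4 : δ ≤ ε / 4 := min_le_left _ _
  have hKδ : K * δ ≤ ε / 4 := by
    have ha : K * δ ≤ K * (ε / (4 * K)) :=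
      mul_le_mul_of_nonneg_left (min_le_right _ _) hKpos.le
    have hb : K * (ε / (4 * K)) = ε / 4 := by
      field_simp
    linarith
  have hLnorm : ∀ w : X, ‖w‖ ≤ δ → ‖L w‖ ≤ ε / 4 := by
    intro w hw
    calc ‖L w‖ ≤ ‖L‖ * ‖w‖ := L.le_opNorm _
    _ ≤ ‖L‖ * δ := mul_le_mul_of_nonneg_left hw (norm_nonneg _)
    _ ≤ K * δ := mul_le_mul_of_nonneg_right (by rw [hKdef]; linarith) hδpos.le
    _ ≤ ε / 4 := hKδ
  have key : ∀ (y : X) (n : ℕ),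
      ‖(T ^ (B * n)) y - z‖ < δ → ‖(T ^ (C * n)) y - b₂‖ < δ →
      ‖(T ^ (D * n)) y - b₂‖ < δ → ‖(T ^ (A * n)) y - (b₁ - L b₂)‖ < δ →
      ∃ (N : ℕ) (u v : X), ‖u - p‖ < ε ∧ ‖v - q‖ < ε ∧
        ‖(T ^ N) u - b₁‖ < ε ∧ ‖(T ^ N) v - b₂‖ < ε := by
    intro y n hw₀ hcC hcD hcA
    set N := (D - B) * n with hNdef
    set w₀ := (T ^ (B * n)) y with hw₀def
    set cC := (T ^ (C * n)) y with hcCdef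
    have hNw₀ : (T ^ N) w₀ = (T ^ (D * n)) y := by
      rw [hw₀def, ← pow_add_apply]
      have : N + B * n = D * n := by
        rw [hNdef, ← Nat.add_mul, Nat.sub_add_cancel hBD.le]
      rw [this]
    have hNcC : (T ^ N) cC = (T ^ (A * n)) y := by
      rw [hcCdef, ← pow_add_apply]
      have : N + C * n = A * n := by
        rw [hNdef, ← Nat.add_mul]
        congr 1
        omega
      rw [this]
    have hNL : (T ^ N) (L w₀) = L ((T ^ N) w₀) := pow_comm_apply T N (A * n₂) w₀
    refine ⟨N, L w₀ + cC, w₀, ?_, ?_, ?_, ?_⟩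
    · -- ‖L w₀ + cC - p‖ < ε
      have hrw : L w₀ + cC - p = L (w₀ - z) + ((L z - (p - b₂)) + (cC - b₂)) := by
        rw [map_sub]
        abel
      rw [hrw]
      have h1 : ‖L (w₀ - z)‖ ≤ ε / 4 := hLnorm _ hw₀.le
      have h2 : ‖L z - (p - b₂)‖ < ε / 4 := hn₂
      calc ‖L (w₀ - z) + ((L z - (p - b₂)) + (cC - b₂))‖
          ≤ ‖L (w₀ - z)‖ + ‖(L z - (p - b₂)) + (cC - b₂)‖ := norm_add_le _ _
      _ ≤ ‖L (w₀ - z)‖ + (‖L z - (p - b₂)‖ + ‖cC - b₂‖) := by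
          linarith [norm_add_le (L z - (p - b₂)) (cC - b₂)]
      _ < ε := by linarith
    · -- ‖w₀ - q‖ < ε
      have hrw : w₀ - q = (w₀ - z) + (z - q) := by abel
      rw [hrw]
      calc ‖(w₀ - z) + (z - q)‖ ≤ ‖w₀ - z‖ + ‖z - q‖ := norm_add_le _ _
      _ < ε := by linarith
    · -- ‖(T ^ N) (L w₀ + cC) - b₁‖ < ε
      rw [map_add, hNL, hNw₀, hNcC]
      have hrw : L ((T ^ (D * n)) y) + (T ^ (A * n)) y - b₁
          = L ((T ^ (D * n)) y - b₂) + ((T ^ (A * n)) y - (b₁ - L b₂)) := by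
        rw [map_sub]
        abel
      rw [hrw]
      have h1 : ‖L ((T ^ (D * n)) y - b₂)‖ ≤ ε / 4 := hLnorm _ hcD.le
      calc ‖L ((T ^ (D * n)) y - b₂) + ((T ^ (A * n)) y - (b₁ - L b₂))‖
          ≤ ‖L ((T ^ (D * n)) y - b₂)‖ + ‖(T ^ (A * n)) y - (b₁ - L b₂)‖ := norm_add_le _ _
      _ < ε := by linarith
    · -- ‖(T ^ N) w₀ - b₂‖ < ε
      rw [hNw₀]
      linarith
  rcases hB with hB0 | hBJ
  · -- B = 0 : use y := z
    obtain ⟨n, hn⟩ :=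
      targets hz (fun i => if i = A then b₁ - L b₂ else if i = B then z else b₂) hδpos
    apply key z n
    · rw [hB0, Nat.zero_mul, pow_zero, ContinuousLinearMap.one_apply]
      simpa using hδpos
    · have h := hn ⟨C, hC⟩
      rw [show (if C = A then b₁ - L b₂ else if C = B then z else b₂) = b₂ from by
        rw [if_neg (by omega : ¬ C = A), if_neg (by omega : ¬ C = B)]] at h
      rw [pow_mul]
      exact h
    · have h := hn ⟨D, hD⟩
      rw [show (if D = A then b₁ - L b₂ else if D = B then z else b₂) = b₂ from by
        rw [if_neg (by omega : ¬ D = A), if_neg (by omega : ¬ D = B)]] at h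
      rw [pow_mul]
      exact h
    · have h := hn ⟨A, hA⟩
      rw [show (if A = A then b₁ - L b₂ else if A = B then z else b₂) = b₁ - L b₂ from
        if_pos rfl] at h
      rw [pow_mul]
      exact h
  · -- B ∈ J : use y := x
    obtain ⟨n, hn⟩ :=
      targets hx (fun i => if i = A then b₁ - L b₂ else if i = B then z else b₂) hδpos
    apply key x n
    · have h := hn ⟨B, hBJ⟩
      rw [show (if B = A then b₁ - L b₂ else if B = B then z else b₂) = z from by
        rw [if_neg (by omega : ¬ B = A), if_pos rfl]] at h
      rw [pow_mul]
      exact h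
    · have h := hn ⟨C, hC⟩
      rw [show (if C = A then b₁ - L b₂ else if C = B then z else b₂) = b₂ from by
        rw [if_neg (by omega : ¬ C = A), if_neg (by omega : ¬ C = B)]] at h
      rw [pow_mul]
      exact h
    · have h := hn ⟨D, hD⟩
      rw [show (if D = A then b₁ - L b₂ else if D = B then z else b₂) = b₂ from by
        rw [if_neg (by omega : ¬ D = A), if_neg (by omega : ¬ D = B)]] at h
      rw [pow_mul]
      exact h
    · have h := hn ⟨A, hA⟩
      rw [show (if A = A then b₁ - L b₂ else if A = B then z else b₂) = b₁ - L b₂ from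
        if_pos rfl] at h
      rw [pow_mul]
      exact h

end Stmt0Proof

theorem stmt0 {X : Type*} [NormedAddCommGroup X] [NormedSpace ℂ X] [CompleteSpace X]
    (J : Finset ℕ) (hJne : J.Nonempty) (hJpos : ∀ j ∈ J, 0 < j)
    (hNotSidon : ¬ IsSidon ((J : Set ℕ) ∪ {0}))
    (T : X →L[ℂ] X)
    (hdh : ∃ x : X, Dense (Set.range fun n : ℕ => fun j : J => ((T ^ (j : ℕ)) ^ n) x)) :
    WeaklyMixing T := by
  classical
  obtain ⟨x, hx⟩ := hdh
  have hxD : Stmt0Proof.DHC J T x := hx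
  rw [IsSidon] at hNotSidon
  push_neg at hNotSidon
  obtain ⟨a, ha, b, hb, c, hc, d, hd, hsum, hne⟩ := hNotSidon
  obtain ⟨A, B, C, D, hsum', hBD, hDC, hCA, hA4, hB4, hC4, hD4⟩ := Stmt0Proof.quad hsum hne
  have hmem : ∀ {k : ℕ}, (k = a ∨ k = b ∨ k = c ∨ k = d) → k ∈ (↑J : Set ℕ) ∪ {0} := by
    rintro k (rfl | rfl | rfl | rfl) <;> assumption
  have hJ' : ∀ {k : ℕ}, k ∈ (↑J : Set ℕ) ∪ {0} → 0 < k → k ∈ J := by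
    rintro k (hk | hk) hpos
    · exact hk
    · simp only [Set.mem_singleton_iff] at hk
      omega
  have hA : A ∈ J := hJ' (hmem hA4) (by omega)
  have hC : C ∈ J := hJ' (hmem hC4) (by omega)
  have hD : D ∈ J := hJ' (hmem hD4) (by omega)
  have hB : B = 0 ∨ B ∈ J := by
    rcases hmem hB4 with h | h
    · exact Or.inr h
    · simp only [Set.mem_singleton_iff] at h
      exact Or.inl h
  have tr : ∀ (p q b₁ b₂ : X) (ε : ℝ), 0 < ε →
      ∃ (N : ℕ) (u v : X), ‖u - p‖ < ε ∧ ‖v - q‖ < ε ∧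
        ‖(T ^ N) u - b₁‖ < ε ∧ ‖(T ^ N) v - b₂‖ < ε :=
    fun p q b₁ b₂ ε hε =>
      Stmt0Proof.transit hxD hA hC hD hB hsum' hBD hDC hCA p q b₁ b₂ ε hε
  -- Birkhoff transitivity argument
  set e : ℕ × ℕ → X × X := fun i => ((T ^ (A * i.1)) x, (T ^ (A * i.2)) x) with he_def
  have he : ∀ (st : X × X), ∀ ρ : ℝ, 0 < ρ → ∃ i, dist st (e i) < ρ := by
    intro st ρ hρ
    obtain ⟨n1, h1⟩ := Stmt0Proof.coordDense hxD hA st.1 hρ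
    obtain ⟨n2, h2⟩ := Stmt0Proof.coordDense hxD hA st.2 hρ
    refine ⟨(n1, n2), ?_⟩
    rw [Prod.dist_eq]
    apply max_lt
    · rw [dist_eq_norm, norm_sub_rev]
      exact h1
    · rw [dist_eq_norm, norm_sub_rev]
      exact h2
  set U : (ℕ × ℕ) × ℕ → Set (X × X) := fun ik =>
    ⋃ N : ℕ, {uv : X × X | ‖(T ^ N) uv.1 - (e ik.1).1‖ < 1 / ((ik.2 : ℝ) + 1) ∧
                            ‖(T ^ N) uv.2 - (e ik.1).2‖ < 1 / ((ik.2 : ℝ) + 1)} with hU_def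
  have hUopen : ∀ ik, IsOpen (U ik) := by
    intro ik
    apply isOpen_iUnion
    intro N
    apply IsOpen.and
    · exact isOpen_lt (Continuous.norm (((T ^ N).continuous.comp continuous_fst).sub
        continuous_const)) continuous_const
    · exact isOpen_lt (Continuous.norm (((T ^ N).continuous.comp continuous_snd).sub
        continuous_const)) continuous_const
  have hUdense : ∀ ik, Dense (U ik) := by
    intro ik
    intro pq
    rw [Metric.mem_closure_iff]
    intro ρ hρ
    have hk : (0:ℝ) < 1 / ((ik.2 : ℝ) + 1) := by positivity
    have hε' : (0:ℝ) < min ρ (1 / ((ik.2 : ℝ) + 1)) := lt_min hρ hk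
    obtain ⟨N, u, v, h1, h2, h3, h4⟩ := tr pq.1 pq.2 (e ik.1).1 (e ik.1).2 _ hε'
    refine ⟨(u, v), Set.mem_iUnion.mpr ⟨N,
      ⟨lt_of_lt_of_le h3 (min_le_right _ _), lt_of_lt_of_le h4 (min_le_right _ _)⟩⟩, ?_⟩
    rw [Prod.dist_eq]
    apply max_lt
    · rw [dist_eq_norm, norm_sub_rev]
      exact lt_of_lt_of_le h1 (min_le_left _ _)
    · rw [dist_eq_norm, norm_sub_rev]
      exact lt_of_lt_of_le h2 (min_le_left _ _)
  have hGdense : Dense (⋂ ik, U ik) := dense_iInter_of_isOpen hUopen hUdense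
  obtain ⟨⟨u, v⟩, huv⟩ := hGdense.nonempty
  refine ⟨u, v, ?_⟩
  intro st
  rw [Metric.mem_closure_iff]
  intro ε hε
  obtain ⟨k, hk⟩ := exists_nat_one_div_lt (show (0:ℝ) < ε / 2 by linarith)
  obtain ⟨i, hi⟩ := he st (ε / 2) (by linarith)
  have h1 := Set.mem_iInter.mp huv (i, k)
  obtain ⟨N, hN⟩ := Set.mem_iUnion.mp h1
  refine ⟨((T ^ N) u, (T ^ N) v), ⟨N, rfl⟩, ?_⟩
  have hdist2 : dist (e i) ((T ^ N) u, (T ^ N) v) < ε / 2 := by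
    rw [Prod.dist_eq]
    apply max_lt
    · rw [dist_eq_norm, norm_sub_rev]
      exact lt_trans hN.1 hk
    · rw [dist_eq_norm, norm_sub_rev]
      exact lt_trans hN.2 hk
  calc dist st ((T ^ N) u, (T ^ N) v)
      ≤ dist st (e i) + dist (e i) ((T ^ N) u, (T ^ N) v) := dist_triangle _ _ _
  _ < ε / 2 + ε / 2 := by linarith
  _ = ε := by ring
end

section
/- Let X be a separable complex Banach space and let T_1, …, T_N be continuous linear operators on X such that T_1 commutes with T_i for every 2 ≤ i ≤ N. Then the family {T_1, …, T_N} is disjoint hypercyclic if and only if it is disjoint transitive. -/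
open Set Topology TopologicalSpace

lemma piMap_denseRange {X : Type*} [TopologicalSpace X] {N : ℕ} {S : X → X}
    (hd : DenseRange S) :
    DenseRange (fun v : Fin N → X => fun i => S (v i)) := by
  intro w
  rw [mem_closure_iff]
  intro W hW hwW
  obtain ⟨I, u, hu, hsub⟩ := isOpen_pi_iff.1 hW w hwW
  have key : ∀ i : Fin N, ∃ z : X, i ∈ I → S z ∈ u i := by
    intro i
    by_cases h : i ∈ I
    · obtain ⟨y, hyu, z, rfl⟩ :=
        mem_closure_iff.1 (hd (w i)) (u i) (hu i h).1 (hu i h).2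
      exact ⟨z, fun _ => hyu⟩
    · exact ⟨w i, fun hi => absurd hi h⟩
  choose z hz using key
  exact ⟨fun i => S (z i), hsub fun i hi => hz i hi, ⟨z, rfl⟩⟩

theorem stmt4 {X : Type*} [NormedAddCommGroup X] [NormedSpace ℂ X] [CompleteSpace X]
    [TopologicalSpace.SeparableSpace X] {N : ℕ} (hN : 0 < N)
    (T : Fin N → (X →L[ℂ] X))
    (hcomm : ∀ i : Fin N, Commute (T ⟨0, hN⟩) (T i)) :
    (∃ x : X, Dense (Set.range fun n : ℕ => fun i : Fin N => ((T i) ^ n) x)) ↔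
      (∀ U : Set X, IsOpen U → U.Nonempty →
        ∀ V : Fin N → Set X, (∀ i, IsOpen (V i)) → (∀ i, (V i).Nonempty) →
          ∃ n : ℕ, (U ∩ ⋂ i : Fin N, ((T i) ^ n) ⁻¹' (V i)).Nonempty) := by
  haveI : SecondCountableTopology X := UniformSpace.secondCountable_of_separable X
  set i0 : Fin N := ⟨0, hN⟩
  set S : X →L[ℂ] X := T i0 with hSdef
  constructor
  · rintro ⟨x, hx⟩ U hU hUne V hV hVne
    by_cases hsub : Subsingleton X
    · obtain ⟨u, hu⟩ := hUne
      refine ⟨0, u, hu, ?_⟩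
      simp only [Set.mem_iInter, Set.mem_preimage]
      intro i
      obtain ⟨v, hv⟩ := hVne i
      rwa [Subsingleton.elim (((T i) ^ 0) u) v]
    haveI : Nontrivial X := not_subsingleton_iff_nontrivial.mp hsub
    haveI : ∀ y : X, Filter.NeBot (𝓝[≠] y) := fun y =>
      Module.punctured_nhds_neBot ℂ X y
    -- the orbit of x under S is dense
    have horb : Dense (Set.range fun n : ℕ => (S ^ n) x) := by
      intro y
      rw [mem_closure_iff]
      intro o ho hyo
      obtain ⟨v, hv, n, hn⟩ := mem_closure_iff.1
        (hx (fun _ => y)) ((fun v : Fin N → X => v i0) ⁻¹' o)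
        (ho.preimage (continuous_apply i0)) hyo
      exact ⟨v i0, hv, n, by rw [← hn]⟩
    -- S has dense range
    have hdr : DenseRange (S : X → X) := by
      have h1 : Dense ((Set.range fun n : ℕ => (S ^ n) x) \ {x}) :=
        horb.diff_singleton x
      refine h1.mono ?_
      rintro _ ⟨⟨n, rfl⟩, hne⟩
      cases n with
      | zero => exact absurd (by simp) hne
      | succ m =>
        exact ⟨(S ^ m) x, by show S ((S ^ m) x) = (S ^ (m + 1)) x; rw [pow_succ']; rfl⟩
    -- each power of S has dense range
    have hdrm : ∀ m : ℕ, DenseRange ((S ^ m : X →L[ℂ] X) : X → X) := by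
      intro m
      induction m with
      | zero => simpa using denseRange_id
      | succ m ih =>
        have : ((S ^ (m + 1) : X →L[ℂ] X) : X → X) =
            ((S ^ m : X →L[ℂ] X) : X → X) ∘ (S : X → X) := by
          funext y; rw [pow_succ]; rfl
        rw [this]
        exact ih.comp hdr (S ^ m).continuous
    -- find a point of U which is still disjoint hypercyclic
    obtain ⟨_, ⟨m, rfl⟩, hmU⟩ := horb.exists_mem_open hU hUne
    set y := (S ^ m) x with hy
    have hyd : Dense (Set.range fun n : ℕ => fun i : Fin N => ((T i) ^ n) y) := by
      have hcommim : ∀ i n, ((T i) ^ n) y = (S ^ m) (((T i) ^ n) x) := by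
        intro i n
        have h := ((hcomm i).symm.pow_pow n m).eq
        calc ((T i) ^ n) y = ((T i) ^ n * S ^ m) x := rfl
          _ = (S ^ m * (T i) ^ n) x := by rw [h]
          _ = (S ^ m) (((T i) ^ n) x) := rfl
      have : (Set.range fun n : ℕ => fun i : Fin N => ((T i) ^ n) y) =
          (fun v : Fin N → X => fun i => (S ^ m) (v i)) ''
            (Set.range fun n : ℕ => fun i : Fin N => ((T i) ^ n) x) := by
        rw [← Set.range_comp]
        exact congrArg Set.range (by funext n i; exact hcommim i n)
      rw [this]
      exact (piMap_denseRange (hdrm m)).dense_image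
        (continuous_pi fun i => (S ^ m).continuous.comp (continuous_apply i)) hx
    -- now hit the product of the V i
    have hWopen : IsOpen (Set.pi Set.univ V) :=
      isOpen_set_pi Set.finite_univ (fun i _ => hV i)
    have hWne : (Set.pi Set.univ V).Nonempty := by
      choose v hv using hVne
      exact ⟨v, fun i _ => hv i⟩
    obtain ⟨_, ⟨n, rfl⟩, hnW⟩ := hyd.exists_mem_open hWopen hWne
    refine ⟨n, y, hmU, ?_⟩
    simp only [Set.mem_iInter, Set.mem_preimage]
    exact fun i => hnW i (Set.mem_univ i)
  · intro htrans
    set B := countableBasis X with hB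
    haveI : Countable B := (countable_countableBasis X).to_subtype
    set G : (Fin N → B) → Set X :=
      fun V => ⋃ n : ℕ, ⋂ i : Fin N, ((T i) ^ n) ⁻¹' (V i : Set X) with hG
    have hGopen : ∀ V, IsOpen (G V) := fun V =>
      isOpen_iUnion fun n => isOpen_iInter_of_finite fun i =>
        (isOpen_of_mem_countableBasis (V i).2).preimage ((T i) ^ n).continuous
    have hGdense : ∀ V, Dense (G V) := by
      intro V
      rw [dense_iff_inter_open]
      intro U hU hUne
      obtain ⟨n, z, hzU, hz⟩ := htrans U hU hUne (fun i => (V i : Set X))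
        (fun i => isOpen_of_mem_countableBasis (V i).2)
        (fun i => nonempty_of_mem_countableBasis (V i).2)
      exact ⟨z, hzU, Set.mem_iUnion.2 ⟨n, hz⟩⟩
    have hdense : Dense (⋂ V : Fin N → B, G V) :=
      dense_iInter_of_isOpen hGopen hGdense
    obtain ⟨x, hxmem⟩ := hdense.nonempty
    refine ⟨x, ?_⟩
    intro w
    rw [mem_closure_iff]
    intro W hW hwW
    obtain ⟨I, u, hu, hsub⟩ := isOpen_pi_iff.1 hW w hwW
    have key : ∀ i : Fin N, ∃ b : B, w i ∈ (b : Set X) ∧ (i ∈ I → (b : Set X) ⊆ u i) := by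
      intro i
      by_cases h : i ∈ I
      · obtain ⟨b, hbB, hwb, hbu⟩ := (isBasis_countableBasis X).exists_subset_of_mem_open
          (hu i h).2 (hu i h).1
        exact ⟨⟨b, hbB⟩, hwb, fun _ => hbu⟩
      · obtain ⟨b, hbB, hwb, _⟩ := (isBasis_countableBasis X).exists_subset_of_mem_open
          (Set.mem_univ (w i)) isOpen_univ
        exact ⟨⟨b, hbB⟩, hwb, fun hi => absurd hi h⟩
    choose b hwb hbu using key
    have hxG : x ∈ G b := Set.mem_iInter.1 hxmem b
    obtain ⟨n, hn⟩ := Set.mem_iUnion.1 hxG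
    rw [Set.mem_iInter] at hn
    refine ⟨fun i => ((T i) ^ n) x, hsub fun i hi => hbu i hi (hn i), ⟨n, rfl⟩⟩
end

section
/- Let X be a separable complex Banach space and let T_1, …, T_N be continuous linear operators on X with T_1 commuting with T_i for every 2 ≤ i ≤ N. If x ∈ X is a disjoint hypercyclic vector for {T_1, …, T_N}, then for every n ∈ ℕ the vector T_1^n x is also a disjoint hypercyclic vector for {T_1, …, T_N}. -/
theorem stmt5 {X : Type*} [NormedAddCommGroup X] [NormedSpace ℂ X] [CompleteSpace X]
    [TopologicalSpace.SeparableSpace X] {N : ℕ} (hN : 0 < N)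
    (T : Fin N → (X →L[ℂ] X))
    (hcomm : ∀ i : Fin N, Commute (T ⟨0, hN⟩) (T i))
    (x : X) (hx : Dense (Set.range fun m : ℕ => fun i : Fin N => ((T i) ^ m) x))
    (n : ℕ) :
    Dense (Set.range fun m : ℕ => fun i : Fin N => ((T i) ^ m) (((T ⟨0, hN⟩) ^ n) x)) := by
  classical
  rcases subsingleton_or_nontrivial X with hX | hX
  · have : Subsingleton (Fin N → X) := ⟨fun a b => funext fun i => Subsingleton.elim _ _⟩
    intro y
    rw [mem_closure_iff]
    intro o ho hyo
    exact ⟨_, hyo, 0, Subsingleton.elim _ _⟩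
  set S := T ⟨0, hN⟩ with hS
  -- orbit of S is dense
  have hev : Dense (Set.range fun m : ℕ => (S ^ m) x) := by
    have := (Function.surjective_eval (⟨0, hN⟩ : Fin N)).denseRange.dense_image
      (continuous_apply (⟨0, hN⟩ : Fin N)) hx
    rw [← Set.range_comp] at this
    exact this
  -- S^n has dense range
  haveI : ∀ y : X, Filter.NeBot (nhdsWithin y {y}ᶜ) :=
    fun y => Module.punctured_nhds_neBot ℂ X y
  have hdr : DenseRange ((S ^ n : X →L[ℂ] X) : X → X) := by
    have hfin : (Set.range fun m : Fin n => (S ^ (m : ℕ)) x).Finite :=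
      Set.finite_range _
    have hd2 : Dense ((Set.range fun m : ℕ => (S ^ m) x) \
        (Set.range fun m : Fin n => (S ^ (m : ℕ)) x)) := hev.diff_finite hfin
    apply hd2.mono
    rintro y ⟨⟨m, rfl⟩, hy2⟩
    have hmn : n ≤ m := by
      by_contra h
      exact hy2 ⟨⟨m, Nat.lt_of_not_le h⟩, rfl⟩
    refine ⟨(S ^ (m - n)) x, ?_⟩
    rw [← ContinuousLinearMap.comp_apply, ← ContinuousLinearMap.mul_def, ← pow_add]
    rw [Nat.add_sub_cancel' hmn]
  -- the map Φ on the product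
  set Φ : (Fin N → X) → (Fin N → X) := fun y i => (S ^ n) (y i) with hΦ
  have hΦc : Continuous Φ :=
    continuous_pi fun i => (S ^ n).continuous.comp (continuous_apply i)
  have hΦd : DenseRange Φ := by
    have : Set.univ.pi (fun _ : Fin N => Set.range ((S ^ n : X →L[ℂ] X) : X → X))
        ⊆ Set.range Φ := by
      intro y hy
      choose z hz using fun i => hy i (Set.mem_univ i)
      exact ⟨z, funext fun i => hz i⟩
    exact Dense.mono this (dense_pi Set.univ fun i _ => hdr)
  have key : (Set.range fun m : ℕ => fun i : Fin N => ((T i) ^ m) (((S) ^ n) x))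
      = Φ '' (Set.range fun m : ℕ => fun i : Fin N => ((T i) ^ m) x) := by
    ext y
    constructor
    · rintro ⟨m, rfl⟩
      refine ⟨_, ⟨m, rfl⟩, funext fun i => ?_⟩
      simp only [hΦ]
      rw [← ContinuousLinearMap.comp_apply, ← ContinuousLinearMap.comp_apply,
        ← ContinuousLinearMap.mul_def, ← ContinuousLinearMap.mul_def]
      rw [((hcomm i).pow_pow n m).symm]
    · rintro ⟨_, ⟨m, rfl⟩, rfl⟩
      refine ⟨m, funext fun i => ?_⟩
      simp only [hΦ]
      rw [← ContinuousLinearMap.comp_apply, ← ContinuousLinearMap.comp_apply,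
        ← ContinuousLinearMap.mul_def, ← ContinuousLinearMap.mul_def]
      rw [((hcomm i).pow_pow n m)]
  rw [key]
  exact hΦd.dense_image hΦc hx
end

section
/- Let X be a separable complex Banach space, let J be a finite nonempty set of positive integers, and let T be a continuous linear operator on X such that {T^j : j ∈ J} is disjoint hypercyclic. Let n ≥ 1 and let j_2^1, …, j_2^n ∈ J and j_1^1, …, j_1^n ∈ J ∪ {0} satisfy: (i) j_2^l ≠ j_1^{l'} for all 1 ≤ l, l' ≤ n; (ii) j_2^l ≠ j_2^{l'} for all 1 ≤ l < l' ≤ n; (iii) j_1^l < j_2^l for every 1 ≤ l ≤ n. Then the direct sum T^{j_2^1 − j_1^1} ⊕ … ⊕ T^{j_2^n − j_1^n} is hypercyclic on X^n. -/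
theorem stmt7 {X : Type*} [NormedAddCommGroup X] [NormedSpace ℂ X] [CompleteSpace X]
    [TopologicalSpace.SeparableSpace X]
    (J : Finset ℕ) (hJne : J.Nonempty) (hJpos : ∀ j ∈ J, 0 < j)
    (T : X →L[ℂ] X)
    (hdh : ∃ x : X, Dense (Set.range fun n : ℕ => fun j : J => ((T ^ (j : ℕ)) ^ n) x))
    (n : ℕ) (hn : 1 ≤ n) (j₂ j₁ : Fin n → ℕ)
    (hj₂ : ∀ l, j₂ l ∈ J) (hj₁ : ∀ l, j₁ l ∈ J ∨ j₁ l = 0)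
    (hi : ∀ l l', j₂ l ≠ j₁ l')
    (hii : Function.Injective j₂)
    (hiii : ∀ l, j₁ l < j₂ l) :
    ∃ x : Fin n → X,
      Dense (Set.range fun m : ℕ => fun l : Fin n => ((T ^ (j₂ l - j₁ l)) ^ m) (x l)) := by
  classical
  obtain ⟨x0, hx0⟩ := hdh
  haveI : SecondCountableTopology X := UniformSpace.secondCountable_of_separable X
  -- basic power identity
  have hpow : ∀ (l : Fin n) (m : ℕ),
      ((T ^ (j₂ l - j₁ l)) ^ m) (((T ^ (j₁ l)) ^ m) x0) = ((T ^ (j₂ l)) ^ m) x0 := by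
    intro l m
    rw [← pow_mul, ← pow_mul, ← pow_mul, ← ContinuousLinearMap.mul_apply, ← pow_add,
      ← Nat.add_mul, Nat.sub_add_cancel (le_of_lt (hiii l))]
  -- the direct sum operator iterates
  set Sm : ℕ → (Fin n → X) → (Fin n → X) :=
    fun m w l => ((T ^ (j₂ l - j₁ l)) ^ m) (w l) with hSm
  have hSmc : ∀ m, Continuous (Sm m) := fun m => continuous_pi fun l =>
    ((T ^ (j₂ l - j₁ l)) ^ m).continuous.comp (continuous_apply l)
  -- the auxiliary orbit and its closure
  set orb : ℕ → (Fin n → X) := fun p l => ((T ^ (j₁ l)) ^ p) x0 with horb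
  set Z : Set (Fin n → X) := closure (Set.range orb) with hZdef
  have hZc : IsClosed Z := isClosed_closure
  have horbZ : ∀ p, orb p ∈ Z := fun p => subset_closure ⟨p, rfl⟩
  -- key simultaneous approximation step
  have key : ∀ (p : ℕ) (v : Fin n → X) (ε : ℝ), 0 < ε →
      ∃ m : ℕ, (∀ l, dist (((T ^ (j₁ l)) ^ m) x0) (orb p l) < ε) ∧
        (∀ l, dist (((T ^ (j₂ l)) ^ m) x0) (v l) < ε) := by
    intro p v ε hε
    set g : J → X := fun j =>
      if h : ∃ l, j₂ l = (j : ℕ) then v h.choose else ((T ^ (j : ℕ)) ^ p) x0 with hg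
    obtain ⟨y, ⟨m, rfl⟩, hdy⟩ := hx0.exists_dist_lt g hε
    have hco : ∀ j : J, dist (((T ^ (j : ℕ)) ^ m) x0) (g j) < ε := by
      intro j
      have hle : dist (g j) ((fun j : J => ((T ^ (j : ℕ)) ^ m) x0) j) ≤
          dist g (fun j : J => ((T ^ (j : ℕ)) ^ m) x0) :=
        dist_le_pi_dist g (fun j : J => ((T ^ (j : ℕ)) ^ m) x0) j
      rw [dist_comm]
      exact lt_of_le_of_lt hle hdy
    refine ⟨m, ?_, ?_⟩
    · intro l
      rcases hj₁ l with h | h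
      · have hne : ¬ ∃ l', j₂ l' = ((⟨j₁ l, h⟩ : J) : ℕ) := by
          rintro ⟨l', hl'⟩; exact hi l' l hl'
        have := hco ⟨j₁ l, h⟩
        rw [hg] at this
        simp only [dif_neg hne] at this
        exact this
      · simp only [horb, h, pow_zero, one_pow, ContinuousLinearMap.one_apply]
        simpa using hε
    · intro l
      have hex : ∃ l', j₂ l' = ((⟨j₂ l, hj₂ l⟩ : J) : ℕ) := ⟨l, rfl⟩
      have := hco ⟨j₂ l, hj₂ l⟩
      rw [hg] at this
      simp only [dif_pos hex] at this
      have hchoose : hex.choose = l := hii hex.choose_spec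
      rwa [hchoose] at this
  -- transitivity-type claim relative to Z
  have claim : ∀ V : Set (Fin n → X), IsOpen V → V.Nonempty →
      ∀ N : Set (Fin n → X), IsOpen N → (N ∩ Z).Nonempty →
      ∃ w, w ∈ N ∧ w ∈ Z ∧ ∃ m, Sm m w ∈ V := by
    intro V hV hVne N hN hNZ
    obtain ⟨z, hzN, hzZ⟩ := hNZ
    obtain ⟨-, hpN, p, rfl⟩ := mem_closure_iff.1 hzZ N hN hzN
    obtain ⟨v, hv⟩ := hVne
    obtain ⟨δ, hδ, hballN⟩ := Metric.isOpen_iff.1 hN (orb p) hpN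
    obtain ⟨ε, hε, hballV⟩ := Metric.isOpen_iff.1 hV v hv
    obtain ⟨m, h1, h2⟩ := key p v (min δ ε) (lt_min hδ hε)
    refine ⟨orb m, ?_, horbZ m, m, ?_⟩
    · apply hballN
      rw [Metric.mem_ball]
      exact (dist_pi_lt_iff hδ).2 fun l => lt_of_lt_of_le (h1 l) (min_le_left _ _)
    · apply hballV
      rw [Metric.mem_ball]
      refine (dist_pi_lt_iff hε).2 fun l => ?_
      have : Sm m (orb m) l = ((T ^ (j₂ l)) ^ m) x0 := hpow l m
      rw [this]
      exact lt_of_lt_of_le (h2 l) (min_le_right _ _)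
  -- Baire category on Z
  obtain ⟨B, hBc, hBe, hBb⟩ := TopologicalSpace.exists_countable_basis (Fin n → X)
  haveI : CompleteSpace Z := hZc.completeSpace_coe
  haveI : Countable B := hBc.to_subtype
  have hZne : Z.Nonempty := ⟨orb 0, horbZ 0⟩
  haveI : Nonempty Z := hZne.to_subtype
  set G : Set (Fin n → X) → Set (Fin n → X) := fun V => ⋃ m, Sm m ⁻¹' V with hG
  set f : B → Set Z := fun V =>
    if V.1.Nonempty then Subtype.val ⁻¹' (G V.1) else Set.univ with hf
  have hfo : ∀ V, IsOpen (f V) := by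
    intro V
    by_cases h : V.1.Nonempty
    · simp only [hf, if_pos h]
      exact (isOpen_iUnion fun m =>
        (hBb.isOpen V.2).preimage (hSmc m)).preimage continuous_subtype_val
    · simp only [hf, if_neg h]
      exact isOpen_univ
  have hfd : ∀ V, Dense (f V) := by
    intro V
    by_cases h : V.1.Nonempty
    · simp only [hf, if_pos h]
      rw [dense_iff_inter_open]
      intro U hU hUne
      obtain ⟨N, hNo, rfl⟩ := isOpen_induced_iff.1 hU
      obtain ⟨z, hz⟩ := hUne
      obtain ⟨w, hwN, hwZ, m, hm⟩ := claim V.1 (hBb.isOpen V.2) h N hNo ⟨z.1, hz, z.2⟩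
      exact ⟨⟨w, hwZ⟩, hwN, Set.mem_iUnion.2 ⟨m, hm⟩⟩
    · simp only [hf, if_neg h]
      exact dense_univ
  obtain ⟨z, hz⟩ := (dense_iInter_of_isOpen hfo hfd).nonempty
  refine ⟨z.1, hBb.dense_iff.2 ?_⟩
  intro o ho hone
  have hzo := Set.mem_iInter.1 hz ⟨o, ho⟩
  rw [hf] at hzo
  simp only [if_pos hone] at hzo
  obtain ⟨m, hm⟩ := Set.mem_iUnion.1 hzo
  exact ⟨Sm m z.1, hm, m, rfl⟩
end

section
/- Fix n ≥ 1 and define positive integers k_1, …, k_n by k_1 = n + 1 and k_{j+1} = 2(k_j + j) + 1 for 1 ≤ j < n. Then the set {0} ∪ {k_l : 1 ≤ l ≤ n} ∪ {k_l + l : 1 ≤ l ≤ n} is a Sidon set. -/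
section Aux

variable (n : ℕ) (k : ℕ → ℕ) (hn : 1 ≤ n) (hk1 : k 1 = n + 1)
  (hkrec : ∀ j, 1 ≤ j → j < n → k (j + 1) = 2 * (k j + j) + 1)

/-- elements description -/
def InA (x : ℕ) : Prop :=
  x = 0 ∨ ∃ l, 1 ≤ l ∧ l ≤ n ∧ (x = k l ∨ x = k l + l)

include hkrec in
lemma kmono : ∀ i j, 1 ≤ i → i ≤ j → j ≤ n → k i ≤ k j := by
  intro i j h1 hij hjn
  induction j, hij using Nat.le_induction with
  | base => exact le_refl _
  | succ j hij ih =>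
    have hjn' : j ≤ n := by omega
    have h1j : 1 ≤ j := le_trans h1 hij
    have hjltn : j < n := by omega
    have := hkrec j h1j hjltn
    have := ih hjn'
    omega

include hk1 hkrec in
lemma klb : ∀ j, 1 ≤ j → j ≤ n → n + 1 ≤ k j := by
  intro j h1 h2
  have := kmono n k hkrec 1 j le_rfl h1 h2
  omega

include hkrec in
lemma klevel : ∀ m l, 1 ≤ m → m < l → l ≤ n → k m + m < k l := by
  intro m l h1 hml hln
  have hstep := hkrec m h1 (by omega)
  have := kmono n k hkrec (m + 1) l (by omega) (by omega) hln
  omega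

include hn hk1 hkrec in
lemma gap : ∀ x, InA n k x → ∀ m, 1 ≤ m → m ≤ n → x < k m → 2 * x < k m := by
  intro x hx m hm1 hmn hxm
  rcases hx with rfl | ⟨j, hj1, hjn, hj⟩
  · have := klb n k hk1 hkrec m hm1 hmn; omega
  · have hjm : j < m := by
      by_contra h
      push_neg at h
      have := kmono n k hkrec m j hm1 h hjn
      omega
    have hstep := hkrec j hj1 (by omega)
    have := kmono n k hkrec (j + 1) m (by omega) (by omega) hmn
    omega

include hn hk1 hkrec in
lemma gap2 : ∀ x, InA n k x → ∀ m, 1 ≤ m → m ≤ n → x < k m → x + n < k m := by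
  intro x hx m hm1 hmn hxm
  have hg := gap n k hn hk1 hkrec x hx m hm1 hmn hxm
  rcases hx with rfl | ⟨j, hj1, hjn, hj⟩
  · have := klb n k hk1 hkrec m hm1 hmn; omega
  · have := klb n k hk1 hkrec j hj1 hjn
    omega

include hn hk1 hkrec in
lemma diff : ∀ l, 1 ≤ l → l ≤ n → ∀ x, InA n k x → ∀ y, InA n k y →
    x ≤ k l → x ≠ y + l := by
  intro l hl1 hln x hx y hy hxl hxy
  rcases hx with rfl | ⟨m, hm1, hmn, hm⟩
  · omega
  · rcases hm with rfl | rfl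
    · -- x = k m, so y = k m - l < k m
      have hg := gap2 n k hn hk1 hkrec y hy m hm1 hmn (by omega)
      omega
    · -- x = k m + m ≤ k l, so m < l
      have hml : m < l := by
        by_contra h
        push_neg at h
        have := kmono n k hkrec l m hl1 h hmn
        omega
      -- y = k m + m - l < k m
      have hg := gap2 n k hn hk1 hkrec y hy m hm1 hmn (by omega)
      omega

include hn hk1 hkrec in
lemma main_sorted : ∀ a b c d, InA n k a → InA n k b → InA n k c → InA n k d →
    a ≤ b → c ≤ d → d ≤ b → a + b = c + d → a = c ∧ b = d := by
  intro a b c d ha hb hc hd hab hcd hdb hsum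
  rcases hb with rfl | ⟨l, hl1, hln, hl⟩
  · omega
  · have hbub : b ≤ k l + l := by rcases hl with rfl | rfl <;> omega
    have hblb : k l ≤ b := by rcases hl with rfl | rfl <;> omega
    -- d ≥ k l
    have hdlb : k l ≤ d := by
      by_contra h
      push_neg at h
      have := gap n k hn hk1 hkrec d hd l hl1 hln h
      omega
    -- d has the form k l or k l + l
    have hdform : d = k l ∨ d = k l + l := by
      rcases hd with rfl | ⟨m, hm1, hmn, hm⟩
      · have := klb n k hk1 hkrec l hl1 hln; omega
      · rcases lt_trichotomy m l with hml | rfl | hlm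
        · have := klevel n k hkrec m l hm1 hml hln
          omega
        · exact hm
        · have := klevel n k hkrec l m hl1 hlm hmn
          omega
    rcases hl with rfl | rfl <;> rcases hdform with hd' | hd'
    · omega
    · omega
    · -- b = k l + l, d = k l : then c = a + l, contradiction with diff
      have := diff n k hn hk1 hkrec l hl1 hln c hc a ha (by omega)
      omega
    · omega

include hn hk1 hkrec in
lemma main_sym : ∀ a b c d, InA n k a → InA n k b → InA n k c → InA n k d →
    a + b = c + d → (a = c ∧ b = d) ∨ (a = d ∧ b = c) := by
  intro a b c d ha hb hc hd hsum
  have M := main_sorted n k hn hk1 hkrec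
  rcases le_total a b with h1 | h1 <;> rcases le_total c d with h2 | h2
  · rcases le_total d b with h3 | h3
    · have := M a b c d ha hb hc hd h1 h2 h3 hsum; omega
    · have := M c d a b hc hd ha hb h2 h1 h3 (by omega); omega
  · rcases le_total c b with h3 | h3
    · have := M a b d c ha hb hd hc h1 h2 h3 (by omega); omega
    · have := M d c a b hd hc ha hb h2 h1 h3 (by omega); omega
  · rcases le_total d a with h3 | h3
    · have := M b a c d hb ha hc hd h1 h2 h3 (by omega); omega
    · have := M c d b a hc hd hb ha h2 h1 h3 (by omega); omega
  · rcases le_total c a with h3 | h3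
    · have := M b a d c hb ha hd hc h1 h2 h3 (by omega); omega
    · have := M d c b a hd hc hb ha h2 h1 h3 (by omega); omega

end Aux

theorem stmt9 (n : ℕ) (hn : 1 ≤ n) (k : ℕ → ℕ)
    (hk1 : k 1 = n + 1)
    (hkrec : ∀ j, 1 ≤ j → j < n → k (j + 1) = 2 * (k j + j) + 1) :
    IsSidon ({0} ∪ {m : ℕ | ∃ l, 1 ≤ l ∧ l ≤ n ∧ m = k l} ∪
      {m : ℕ | ∃ l, 1 ≤ l ∧ l ≤ n ∧ m = k l + l}) := by
  intro a ha b hb c hc d hd hsum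
  have conv : ∀ x, x ∈ ({0} ∪ {m : ℕ | ∃ l, 1 ≤ l ∧ l ≤ n ∧ m = k l} ∪
      {m : ℕ | ∃ l, 1 ≤ l ∧ l ≤ n ∧ m = k l + l}) → InA n k x := by
    intro x hx
    rcases hx with (hx | hx) | hx
    · exact Or.inl hx
    · obtain ⟨l, h1, h2, h3⟩ := hx
      exact Or.inr ⟨l, h1, h2, Or.inl h3⟩
    · obtain ⟨l, h1, h2, h3⟩ := hx
      exact Or.inr ⟨l, h1, h2, Or.inr h3⟩
  have := main_sym n k hn hk1 hkrec a b c d (conv a ha) (conv b hb)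
    (conv c hc) (conv d hd) hsum
  rcases this with ⟨rfl, rfl⟩ | ⟨rfl, rfl⟩
  · rfl
  · exact Set.pair_comm a b
end

section
/- Let X be a complex Banach space and T a continuous linear operator on X. If the pair {T, T²} is disjoint hypercyclic, then T is weakly mixing. -/
open Metric

section Aux

variable {X : Type*} [NormedAddCommGroup X] [NormedSpace ℂ X]

private lemma pow_apply_add (T : X →L[ℂ] X) (a b : ℕ) (y : X) :
    (T ^ (a + b)) y = (T ^ a) ((T ^ b) y) := by
  rw [pow_add]; rfl

/-- The fundamental density property coming from disjoint hypercyclicity of `{T, T²}`. -/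
private lemma sprop (T : X →L[ℂ] X) (x : X)
    (hx : Dense (Set.range fun n : ℕ => ((T ^ n) x, ((T ^ 2) ^ n) x)))
    (a b : X) {ε : ℝ} (hε : 0 < ε) :
    ∃ n : ℕ, ‖(T ^ n) x - a‖ < ε ∧ ‖(T ^ (2 * n)) x - b‖ < ε := by
  have hdr : DenseRange (fun n : ℕ => ((T ^ n) x, ((T ^ 2) ^ n) x)) := hx
  obtain ⟨n, hn⟩ := Metric.denseRange_iff.mp hdr (a, b) ε hε
  rw [Prod.dist_eq] at hn
  obtain ⟨h1, h2⟩ := max_lt_iff.mp hn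
  refine ⟨n, ?_, ?_⟩
  · rw [dist_comm, dist_eq_norm] at h1; exact h1
  · rw [dist_comm, dist_eq_norm] at h2
    simpa [pow_mul] using h2

/-- Orbit density of `x` under `T`. -/
private lemma orbitd (T : X →L[ℂ] X) (x : X)
    (hx : Dense (Set.range fun n : ℕ => ((T ^ n) x, ((T ^ 2) ^ n) x)))
    (a : X) {ε : ℝ} (hε : 0 < ε) :
    ∃ n : ℕ, ‖(T ^ n) x - a‖ < ε :=
  (sprop T x hx a 0 hε).imp fun _ h => h.1

/-- Tail density: every tail of the orbit of `x` is dense. -/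
private lemma taild (T : X →L[ℂ] X) (x : X)
    (hx : Dense (Set.range fun n : ℕ => ((T ^ n) x, ((T ^ 2) ^ n) x)))
    (v : X) {ε : ℝ} (hε : 0 < ε) (Q : ℕ) :
    ∃ j : ℕ, ‖(T ^ (Q + j)) x - v‖ < ε := by
  rcases subsingleton_or_nontrivial X with hS | hS
  · exact ⟨0, by rw [Subsingleton.elim ((T ^ (Q + 0)) x - v) 0, norm_zero]; exact hε⟩
  suffices h : ∃ n : ℕ, Q ≤ n ∧ ‖(T ^ n) x - v‖ < ε by
    obtain ⟨n, hQn, hn⟩ := h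
    exact ⟨n - Q, by rwa [Nat.add_sub_cancel' hQn]⟩
  obtain ⟨e, he⟩ := exists_ne (0 : X)
  have hen : 0 < ‖e‖ := norm_pos_iff.mpr he
  set e' : X := ((‖e‖⁻¹ : ℝ) : ℂ) • e with he'
  have he'n : ‖e'‖ = 1 := by
    rw [he', norm_smul]
    simp [abs_of_nonneg (le_of_lt (inv_pos.mpr hen)), inv_mul_cancel₀ (ne_of_gt hen)]
  set b : ℕ → X := fun i => ((3 * ε * i : ℝ) : ℂ) • e' with hb
  have hsep : ∀ i i' : ℕ, i ≠ i' → 3 * ε ≤ ‖b i - b i'‖ := by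
    intro i i' hii
    have hdiff : b i - b i' = ((3 * ε * i - 3 * ε * i' : ℝ) : ℂ) • e' := by
      rw [hb]; push_cast; rw [sub_smul]
    rw [hdiff, norm_smul, he'n, mul_one, Complex.norm_real, Real.norm_eq_abs]
    have h1 : (1 : ℝ) ≤ |(i : ℝ) - (i' : ℝ)| := by
      have : ((i : ℤ)) ≠ ((i' : ℤ)) := by exact_mod_cast hii
      have h2 : (1 : ℤ) ≤ |(i : ℤ) - (i' : ℤ)| := Int.one_le_abs (sub_ne_zero.mpr this)
      calc (1 : ℝ) ≤ ((|(i : ℤ) - (i' : ℤ)| : ℤ) : ℝ) := by exact_mod_cast h2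
        _ = |(i : ℝ) - (i' : ℝ)| := by push_cast [Int.cast_abs]; ring_nf
    have : 3 * ε * i - 3 * ε * i' = 3 * ε * ((i : ℝ) - i') := by ring
    rw [this, abs_mul, abs_of_pos (by linarith : (0:ℝ) < 3 * ε)]
    nlinarith
  have H : ∀ i : ℕ, ∃ n : ℕ, ‖(T ^ n) x - v‖ < ε ∧ ‖(T ^ (2 * n)) x - b i‖ < ε :=
    fun i => sprop T x hx v (b i) hε
  choose f hf1 hf2 using H
  have hinj : Function.Injective f := by
    intro i i' hfe
    by_contra hne
    have h3 : 3 * ε ≤ ‖b i - b i'‖ := hsep i i' hne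
    have h4 : ‖b i - b i'‖ ≤ ‖(T ^ (2 * f i)) x - b i‖ + ‖(T ^ (2 * f i')) x - b i'‖ := by
      have : b i - b i' = -((T ^ (2 * f i)) x - b i) + ((T ^ (2 * f i')) x - b i') := by
        rw [hfe]; abel
      rw [this]
      calc ‖-((T ^ (2 * f i)) x - b i) + ((T ^ (2 * f i')) x - b i')‖
          ≤ ‖-((T ^ (2 * f i)) x - b i)‖ + ‖(T ^ (2 * f i')) x - b i'‖ := norm_add_le _ _
        _ = ‖(T ^ (2 * f i)) x - b i‖ + ‖(T ^ (2 * f i')) x - b i'‖ := by rw [norm_neg]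
    linarith [hf2 i, hf2 i']
  by_contra hno
  push_neg at hno
  have hlt : ∀ i : Fin (Q + 1), f i < Q := by
    intro i
    by_contra hge
    push_neg at hge
    exact absurd (hf1 i) (not_lt.mpr (hno (f i) hge))
  have : Function.Injective (fun i : Fin (Q + 1) => (⟨f i, hlt i⟩ : Fin Q)) := by
    intro i i' h
    have : f i = f i' := by simpa using congrArg Fin.val h
    exact Fin.val_injective (by exact_mod_cast hinj this)
  have hcard := Fintype.card_le_of_injective _ this
  simp at hcard

/-- Key quantitative transitivity of `T ⊕ T`. -/
private lemma trans4 (T : X →L[ℂ] X) (x : X)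
    (hx : Dense (Set.range fun n : ℕ => ((T ^ n) x, ((T ^ 2) ^ n) x)))
    (u1 u2 v1 v2 : X) {ε : ℝ} (hε : 0 < ε) :
    ∃ (N : ℕ) (u z : X), ‖u - u1‖ < ε ∧ ‖z - u2‖ < ε ∧
      ‖(T ^ N) u - v1‖ < ε ∧ ‖(T ^ N) z - v2‖ < ε := by
  have hε2 : 0 < ε / 2 := by linarith
  obtain ⟨p, hp⟩ := orbitd T x hx u1 hε2
  obtain ⟨n1, hn1⟩ := orbitd T x hx u2 hε
  obtain ⟨j, hj⟩ := taild T x hx v2 hε2 (2 * n1 + p)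
  obtain ⟨m, hm⟩ := taild T x hx v1 hε2 (n1 + j)
  set C1 := ‖T ^ (2 * n1 + j)‖ with hC1
  set C2 := ‖T ^ (n1 + j)‖ with hC2
  have hC1n : 0 ≤ C1 := norm_nonneg _
  have hC2n : 0 ≤ C2 := norm_nonneg _
  have hD : (0:ℝ) < 2 * (C1 + C2 + 1) := by linarith
  set δ := ε / (2 * (C1 + C2 + 1)) with hδ
  have hδpos : 0 < δ := div_pos hε hD
  have hkey : δ * (2 * (C1 + C2 + 1)) = ε := div_mul_cancel₀ ε (ne_of_gt hD)
  have hδle : δ ≤ ε / 2 := by nlinarith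
  have hC1δ : C1 * δ ≤ ε / 2 := by nlinarith
  have hC2δ : C2 * δ ≤ ε / 2 := by nlinarith
  obtain ⟨n2, hn2a, hn2b⟩ := sprop T x hx ((T ^ p) x) ((T ^ m) x) hδpos
  refine ⟨n1 + j + n2, (T ^ n2) x, (T ^ n1) x, ?_, ?_, ?_, ?_⟩
  · -- ‖T^{n2} x - u1‖ < ε
    calc ‖(T ^ n2) x - u1‖
        = ‖((T ^ n2) x - (T ^ p) x) + ((T ^ p) x - u1)‖ := by rw [sub_add_sub_cancel]
      _ ≤ ‖(T ^ n2) x - (T ^ p) x‖ + ‖(T ^ p) x - u1‖ := norm_add_le _ _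
      _ < δ + ε / 2 := by exact add_lt_add hn2a hp
      _ ≤ ε := by linarith
  · exact hn1
  · -- third coordinate
    have e1 : (T ^ (n1 + j + n2)) ((T ^ n2) x) = (T ^ (n1 + j)) ((T ^ (2 * n2)) x) :=
      calc (T ^ (n1 + j + n2)) ((T ^ n2) x)
          = (T ^ ((n1 + j + n2) + n2)) x := (pow_apply_add T _ _ x).symm
        _ = (T ^ ((n1 + j) + 2 * n2)) x := by
            rw [show (n1 + j + n2) + n2 = (n1 + j) + 2 * n2 from by omega]
        _ = (T ^ (n1 + j)) ((T ^ (2 * n2)) x) := pow_apply_add T _ _ x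
    rw [e1]
    have hb1 : ‖(T ^ (n1 + j)) ((T ^ (2 * n2)) x) - (T ^ (n1 + j)) ((T ^ m) x)‖ ≤ C2 * δ := by
      rw [← map_sub]
      calc ‖(T ^ (n1 + j)) ((T ^ (2 * n2)) x - (T ^ m) x)‖
          ≤ C2 * ‖(T ^ (2 * n2)) x - (T ^ m) x‖ := (T ^ (n1 + j)).le_opNorm _
        _ ≤ C2 * δ := mul_le_mul_of_nonneg_left (le_of_lt hn2b) hC2n
    have hb2 : ‖(T ^ (n1 + j)) ((T ^ m) x) - v1‖ < ε / 2 := by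
      rw [← pow_apply_add]
      exact hm
    calc ‖(T ^ (n1 + j)) ((T ^ (2 * n2)) x) - v1‖
        = ‖((T ^ (n1 + j)) ((T ^ (2 * n2)) x) - (T ^ (n1 + j)) ((T ^ m) x))
            + ((T ^ (n1 + j)) ((T ^ m) x) - v1)‖ := by rw [sub_add_sub_cancel]
      _ ≤ ‖(T ^ (n1 + j)) ((T ^ (2 * n2)) x) - (T ^ (n1 + j)) ((T ^ m) x)‖
            + ‖(T ^ (n1 + j)) ((T ^ m) x) - v1‖ := norm_add_le _ _
      _ < C2 * δ + ε / 2 := by exact add_lt_add_of_le_of_lt hb1 hb2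
      _ ≤ ε := by linarith
  · -- fourth coordinate
    have e1 : (T ^ (n1 + j + n2)) ((T ^ n1) x) = (T ^ (2 * n1 + j)) ((T ^ n2) x) :=
      calc (T ^ (n1 + j + n2)) ((T ^ n1) x)
          = (T ^ ((n1 + j + n2) + n1)) x := (pow_apply_add T _ _ x).symm
        _ = (T ^ ((2 * n1 + j) + n2)) x := by
            rw [show (n1 + j + n2) + n1 = (2 * n1 + j) + n2 from by omega]
        _ = (T ^ (2 * n1 + j)) ((T ^ n2) x) := pow_apply_add T _ _ x
    rw [e1]
    have hb1 : ‖(T ^ (2 * n1 + j)) ((T ^ n2) x) - (T ^ (2 * n1 + j)) ((T ^ p) x)‖ ≤ C1 * δ := by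
      rw [← map_sub]
      calc ‖(T ^ (2 * n1 + j)) ((T ^ n2) x - (T ^ p) x)‖
          ≤ C1 * ‖(T ^ n2) x - (T ^ p) x‖ := (T ^ (2 * n1 + j)).le_opNorm _
        _ ≤ C1 * δ := mul_le_mul_of_nonneg_left (le_of_lt hn2a) hC1n
    have hb2 : ‖(T ^ (2 * n1 + j)) ((T ^ p) x) - v2‖ < ε / 2 := by
      rw [← pow_apply_add]
      have e2 : (2 * n1 + j) + p = (2 * n1 + p) + j := by omega
      rw [e2]
      exact hj
    calc ‖(T ^ (2 * n1 + j)) ((T ^ n2) x) - v2‖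
        = ‖((T ^ (2 * n1 + j)) ((T ^ n2) x) - (T ^ (2 * n1 + j)) ((T ^ p) x))
            + ((T ^ (2 * n1 + j)) ((T ^ p) x) - v2)‖ := by rw [sub_add_sub_cancel]
      _ ≤ ‖(T ^ (2 * n1 + j)) ((T ^ n2) x) - (T ^ (2 * n1 + j)) ((T ^ p) x)‖
            + ‖(T ^ (2 * n1 + j)) ((T ^ p) x) - v2‖ := norm_add_le _ _
      _ < C1 * δ + ε / 2 := by exact add_lt_add_of_le_of_lt hb1 hb2
      _ ≤ ε := by linarith

end Aux

theorem stmt18 {X : Type*} [NormedAddCommGroup X] [NormedSpace ℂ X] [CompleteSpace X]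
    (T : X →L[ℂ] X)
    (hdh : ∃ x : X, Dense (Set.range fun n : ℕ => ((T ^ n) x, ((T ^ 2) ^ n) x))) :
    WeaklyMixing T := by
  obtain ⟨x, hx⟩ := hdh
  -- the countable family of open sets for the Baire argument
  set g : ℕ × ℕ × ℕ → Set (X × X) := fun q =>
    ⋃ n : ℕ, (fun y : X × X => ((T ^ n) y.1, (T ^ n) y.2)) ⁻¹'
      (ball ((T ^ q.1) x) (1 / (q.2.2 + 1)) ×ˢ ball ((T ^ q.2.1) x) (1 / (q.2.2 + 1))) with hg
  have ho : ∀ q, IsOpen (g q) := by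
    intro q
    refine isOpen_iUnion fun n => ?_
    refine (isOpen_ball.prod isOpen_ball).preimage ?_
    exact ((T ^ n).continuous.comp continuous_fst).prodMk
      ((T ^ n).continuous.comp continuous_snd)
  have hd : ∀ q, Dense (g q) := by
    rintro ⟨i, jj, k⟩
    rw [Metric.dense_iff]
    intro c r hr
    have hkpos : (0:ℝ) < 1 / (k + 1) := by positivity
    have hεpos : (0:ℝ) < min r (1 / (k + 1)) := lt_min hr hkpos
    obtain ⟨N, u, z, h1, h2, h3, h4⟩ :=
      trans4 T x hx c.1 c.2 ((T ^ i) x) ((T ^ jj) x) hεpos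
    refine ⟨(u, z), ?_, ?_⟩
    · rw [mem_ball, Prod.dist_eq]
      refine max_lt ?_ ?_
      · rw [dist_eq_norm]; exact lt_of_lt_of_le h1 (min_le_left _ _)
      · rw [dist_eq_norm]; exact lt_of_lt_of_le h2 (min_le_left _ _)
    · refine Set.mem_iUnion.mpr ⟨N, ?_⟩
      refine Set.mem_preimage.mpr (Set.mem_prod.mpr ⟨?_, ?_⟩)
      · rw [mem_ball, dist_eq_norm]
        exact lt_of_lt_of_le h3 (min_le_right _ _)
      · rw [mem_ball, dist_eq_norm]
        exact lt_of_lt_of_le h4 (min_le_right _ _)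
  have hGdense : Dense (⋂ q, g q) := dense_iInter_of_isOpen ho hd
  obtain ⟨⟨y0, z0⟩, hy⟩ : (⋂ q, g q).Nonempty := hGdense.nonempty
  refine ⟨y0, z0, ?_⟩
  rw [Metric.dense_iff]
  intro c r hr
  -- approximate c by a pair (T^i x, T^(2i) x)
  have hdr : DenseRange (fun n : ℕ => ((T ^ n) x, ((T ^ 2) ^ n) x)) := hx
  obtain ⟨i, hi⟩ := Metric.denseRange_iff.mp hdr c (r / 2) (by linarith)
  rw [Prod.dist_eq] at hi
  obtain ⟨hi1, hi2⟩ := max_lt_iff.mp hi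
  obtain ⟨k, hk⟩ := exists_nat_one_div_lt (show (0:ℝ) < r / 2 by linarith)
  have hy' := Set.mem_iInter.mp hy (i, 2 * i, k)
  rw [hg] at hy'
  simp only [Set.mem_iUnion, Set.mem_preimage, Set.mem_prod] at hy'
  obtain ⟨N, hN1, hN2⟩ := hy'
  refine ⟨((T ^ N) y0, (T ^ N) z0), ?_, Set.mem_range_self N⟩
  rw [mem_ball, Prod.dist_eq]
  have hk' : (1:ℝ) / (k + 1) < r / 2 := hk
  refine max_lt ?_ ?_
  · rw [mem_ball] at hN1
    calc dist ((T ^ N) y0) c.1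
        ≤ dist ((T ^ N) y0) ((T ^ i) x) + dist ((T ^ i) x) c.1 := dist_triangle _ _ _
      _ < 1 / (k + 1) + r / 2 := add_lt_add hN1 (by rwa [dist_comm] at hi1)
      _ < r := by linarith
  · rw [mem_ball] at hN2
    have hpow : ((T ^ 2) ^ i) x = (T ^ (2 * i)) x := by rw [← pow_mul]
    calc dist ((T ^ N) z0) c.2
        ≤ dist ((T ^ N) z0) ((T ^ (2 * i)) x) + dist ((T ^ (2 * i)) x) c.2 := dist_triangle _ _ _
      _ < 1 / (k + 1) + r / 2 := by
          refine add_lt_add hN2 ?_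
          rw [← hpow]
          rwa [dist_comm] at hi2
      _ < r := by linarith
end
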